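/- Let K be a field of characteristic zero and (Q, ≼) a finite poset. The annihilator R_Q^⊥ of the relation space R_Q with respect to the bilinear form ⟨·,·⟩ is spanned by the following elements of V: (1) for each a ∈ Q, the element e(a,1,a) − e(a,2,a) + Σ_{b ∈ Q, a ≺ b} ( e(b,1,a) + e(a,1,b) − e(b,2,a) − e(a,2,b) ); (2) the elements e(c,1,d) for all incomparable c, d ∈ Q; (3) the elements e(c,2,d) for all incomparable c, d ∈ Q. -/
import Mathlib


open scoped Classical

/-- The minimum of two comparable elements of a poset. -/
noncomputable def pmin {Q : Type*} [PartialOrder Q] (a b : Q) : Q :=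
  if a ≤ b then a else b

/-- The standard basis vector `e(a,i,b)` of `V = (Q × {1,2} × Q) → K` (with `0 : Fin 2`
encoding position `1` and `1 : Fin 2` encoding position `2`). -/
noncomputable def e (K : Type*) [Field K] {Q : Type*} (a : Q) (i : Fin 2) (b : Q) :
    (Q × Fin 2 × Q) → K :=
  fun p => if p = (a, i, b) then 1 else 0

/-- The space of relations `R_Q` of the operad `As(Q)`. -/
noncomputable def relSpace (K : Type*) [Field K] (Q : Type*) [PartialOrder Q] :
    Submodule K ((Q × Fin 2 × Q) → K) :=
  Submodule.span K
    {x | ∃ a b : Q, (a ≤ b ∨ b ≤ a) ∧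
      (x = e K a 0 b - e K (pmin a b) 1 (pmin a b) ∨
       x = e K (pmin a b) 0 (pmin a b) - e K a 1 b)}

/-- The bilinear form on `V` with `⟨e(a,i,b), e(a',i',b')⟩ = 1` if `(a,b) = (a',b')` and
`i = i' = 1`, `= −1` if `(a,b) = (a',b')` and `i = i' = 2`, and `0` otherwise. -/
noncomputable def bform {K : Type*} [Field K] {Q : Type*} [Fintype Q]
    (u w : (Q × Fin 2 × Q) → K) : K :=
  ∑ a : Q, ∑ b : Q, (u (a, 0, b) * w (a, 0, b) - u (a, 1, b) * w (a, 1, b))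

lemma bform_add {K : Type*} [Field K] {Q : Type*} [Fintype Q]
    (r u v : (Q × Fin 2 × Q) → K) :
    bform r (u + v) = bform r u + bform r v := by
  unfold bform
  rw [← Finset.sum_add_distrib]
  refine Finset.sum_congr rfl fun a _ => ?_
  rw [← Finset.sum_add_distrib]
  refine Finset.sum_congr rfl fun b _ => ?_
  simp only [Pi.add_apply]
  ring

lemma bform_smul {K : Type*} [Field K] {Q : Type*} [Fintype Q]
    (c : K) (r v : (Q × Fin 2 × Q) → K) :
    bform r (c • v) = c * bform r v := by
  unfold bform
  rw [Finset.mul_sum]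
  refine Finset.sum_congr rfl fun a _ => ?_
  rw [Finset.mul_sum]
  refine Finset.sum_congr rfl fun b _ => ?_
  simp only [Pi.smul_apply, smul_eq_mul]
  ring

/-- The annihilator `S^⊥ = {v ∈ V : ⟨r, v⟩ = 0 for all r ∈ S}` of a subspace `S` of `V`
with respect to the bilinear form `⟨·,·⟩`. -/
noncomputable def annih (K : Type*) [Field K] (Q : Type*) [Fintype Q]
    (S : Submodule K ((Q × Fin 2 × Q) → K)) : Submodule K ((Q × Fin 2 × Q) → K) where
  carrier := {v | ∀ r ∈ S, bform r v = 0}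
  add_mem' := by
    intro u v hu hv r hr
    rw [bform_add, hu r hr, hv r hr, add_zero]
  zero_mem' := by
    intro r hr
    simp [bform]
  smul_mem' := by
    intro c v hv r hr
    rw [bform_smul, hv r hr, mul_zero]

section Aux
variable {K Q : Type*} [Field K] [Fintype Q]

lemma bform_e0 [PartialOrder Q] (a b : Q) (v : (Q × Fin 2 × Q) → K) :
    bform (e K a 0 b) v = v (a, 0, b) := by
  unfold bform e
  simp [Prod.ext_iff, ite_and, Finset.sum_ite_eq', Fin.ext_iff]

lemma bform_e1 [PartialOrder Q] (a b : Q) (v : (Q × Fin 2 × Q) → K) :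
    bform (e K a 1 b) v = -(v (a, 1, b)) := by
  unfold bform e
  simp [Prod.ext_iff, ite_and, Finset.sum_ite_eq', Fin.ext_iff]

end Aux
section Aux
set_option linter.unusedSectionVars false
variable {K Q : Type*} [Field K] [Fintype Q] [PartialOrder Q]

noncomputable def G (K : Type*) [Field K] {Q : Type*} [Fintype Q] [PartialOrder Q]
    (a : Q) : (Q × Fin 2 × Q) → K :=
  e K a 0 a - e K a 1 a +
    ∑ b ∈ Finset.univ.filter (fun b : Q => a < b),
      (e K b 0 a + e K a 0 b - e K b 1 a - e K a 1 b)

lemma sum_if_left (F : Finset Q) (x : Q) (P : Prop) [Decidable P] (c : K) :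
    (∑ b ∈ F, if x = b ∧ P then c else 0) = if x ∈ F ∧ P then c else 0 := by
  by_cases hP : P
  · simp only [hP, and_true]
    exact Finset.sum_ite_eq F x fun _ => c
  · simp [hP]

lemma sum_if_right (F : Finset Q) (y : Q) (P1 P2 : Prop) [Decidable P1] [Decidable P2] (c : K) :
    (∑ b ∈ F, if P1 ∧ P2 ∧ y = b then c else 0) = if P1 ∧ P2 ∧ y ∈ F then c else 0 := by
  by_cases hP : P1 ∧ P2
  · simp only [hP.1, hP.2, true_and]
    exact Finset.sum_ite_eq F y fun _ => c
  · rcases not_and_or.mp hP with h | h <;> simp [h]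

lemma ite_or_three (P1 P2 P3 : Prop) [Decidable P1] [Decidable P2] [Decidable P3]
    (h12 : ¬(P1 ∧ P2)) (h13 : ¬(P1 ∧ P3)) (h23 : ¬(P2 ∧ P3)) (s : K) :
    ((if P1 then s else 0) + if P2 then s else 0) + (if P3 then s else 0)
      = if P1 ∨ P2 ∨ P3 then s else 0 := by
  by_cases p1 : P1 <;> by_cases p2 : P2 <;> by_cases p3 : P3 <;> simp_all

lemma G_apply (a x y : Q) (i : Fin 2) :
    G K a (x, i, y) =
      if (x = a ∧ y = a) ∨ (a < x ∧ y = a) ∨ (x = a ∧ a < y)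
      then (if i = 0 then (1 : K) else -1) else 0 := by
  have h12 : ¬((x = a ∧ y = a) ∧ (a < x ∧ y = a)) := by
    rintro ⟨⟨rfl, rfl⟩, h, -⟩; exact lt_irrefl _ h
  have h13 : ¬((x = a ∧ y = a) ∧ (x = a ∧ a < y)) := by
    rintro ⟨⟨rfl, rfl⟩, -, h⟩; exact lt_irrefl _ h
  have h23 : ¬((a < x ∧ y = a) ∧ (x = a ∧ a < y)) := by
    rintro ⟨⟨h, rfl⟩, rfl, -⟩; exact lt_irrefl _ h
  unfold G e
  simp only [Pi.add_apply, Pi.sub_apply, Finset.sum_apply, Prod.ext_iff]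
  rw [Finset.sum_sub_distrib, Finset.sum_sub_distrib, Finset.sum_add_distrib,
    sum_if_left, sum_if_left, sum_if_right, sum_if_right]
  simp only [Finset.mem_filter, Finset.mem_univ, true_and]
  fin_cases i <;>
    simp only [Fin.mk_zero, Fin.mk_one, Fin.isValue, show ((0:Fin 2) = 0) = True by simp,
      show ((0:Fin 2) = 1) = False by simp, show ((1:Fin 2) = 0) = False by simp,
      show ((1:Fin 2) = 1) = True by simp, true_and, false_and, and_false, and_true,
      if_true, if_false, ite_false, ite_true, sub_zero, zero_sub, add_zero, zero_add]
  · rw [← ite_or_three _ _ _ h12 h13 h23 (1:K)]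
    ring
  · rw [show (if (x = a ∧ y = a) ∨ (a < x ∧ y = a) ∨ (x = a ∧ a < y) then (-1:K) else 0)
        = -(if (x = a ∧ y = a) ∨ (a < x ∧ y = a) ∨ (x = a ∧ a < y) then (1:K) else 0) by
      split_ifs <;> simp]
    rw [← ite_or_three _ _ _ h12 h13 h23 (1:K)]
    ring

end Aux
section Aux2
set_option linter.unusedSectionVars false
variable {K Q : Type*} [Field K] [Fintype Q] [PartialOrder Q]

lemma pmin_self (a : Q) : pmin a a = a := by simp [pmin]

lemma cond_iff {a b : Q} (hab : a ≤ b ∨ b ≤ a) (c : Q) :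
    ((a = c ∧ b = c) ∨ (c < a ∧ b = c) ∨ (a = c ∧ c < b)) ↔ pmin a b = c := by
  unfold pmin
  by_cases h : a ≤ b
  · rw [if_pos h]
    constructor
    · rintro (⟨rfl, rfl⟩ | ⟨h1, rfl⟩ | ⟨rfl, -⟩)
      · rfl
      · exact absurd (h.trans_lt h1) (lt_irrefl a)
      · rfl
    · rintro rfl
      rcases h.lt_or_eq with hlt | rfl
      · exact Or.inr (Or.inr ⟨rfl, hlt⟩)
      · exact Or.inl ⟨rfl, rfl⟩
  · have hba : b ≤ a := hab.resolve_left h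
    have hlt : b < a := lt_of_le_of_ne hba (by rintro rfl; exact h le_rfl)
    rw [if_neg h]
    constructor
    · rintro (⟨rfl, rfl⟩ | ⟨-, rfl⟩ | ⟨rfl, hc⟩)
      · rfl
      · rfl
      · exact absurd hc.le h
    · rintro rfl
      exact Or.inr (Or.inl ⟨hlt, rfl⟩)

lemma bform_add_left (u w v : (Q × Fin 2 × Q) → K) :
    bform (u + w) v = bform u v + bform w v := by
  unfold bform
  rw [← Finset.sum_add_distrib]
  refine Finset.sum_congr rfl fun a _ => ?_
  rw [← Finset.sum_add_distrib]
  refine Finset.sum_congr rfl fun b _ => ?_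
  simp only [Pi.add_apply]; ring

lemma bform_smul_left (c : K) (u v : (Q × Fin 2 × Q) → K) :
    bform (c • u) v = c * bform u v := by
  unfold bform
  rw [Finset.mul_sum]
  refine Finset.sum_congr rfl fun a _ => ?_
  rw [Finset.mul_sum]
  refine Finset.sum_congr rfl fun b _ => ?_
  simp only [Pi.smul_apply, smul_eq_mul]; ring

lemma bform_sub_left (u w v : (Q × Fin 2 × Q) → K) :
    bform (u - w) v = bform u v - bform w v := by
  unfold bform
  rw [← Finset.sum_sub_distrib]
  refine Finset.sum_congr rfl fun a _ => ?_
  rw [← Finset.sum_sub_distrib]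
  refine Finset.sum_congr rfl fun b _ => ?_
  simp only [Pi.sub_apply]; ring

lemma bform_gen1 (a b : Q) (v : (Q × Fin 2 × Q) → K) :
    bform (e K a 0 b - e K (pmin a b) 1 (pmin a b)) v
      = v (a, 0, b) + v (pmin a b, 1, pmin a b) := by
  rw [bform_sub_left, bform_e0, bform_e1]; ring

lemma bform_gen2 (a b : Q) (v : (Q × Fin 2 × Q) → K) :
    bform (e K (pmin a b) 0 (pmin a b) - e K a 1 b) v
      = v (pmin a b, 0, pmin a b) + v (a, 1, b) := by
  rw [bform_sub_left, bform_e0, bform_e1]; ring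

-- values of G at the relevant points
lemma G_val1 {a b : Q} (hab : a ≤ b ∨ b ≤ a) (c : Q) :
    G K c (a, 0, b) + G K c (pmin a b, 1, pmin a b) = 0 := by
  rw [G_apply, G_apply, if_congr (cond_iff hab c) rfl rfl,
    if_congr ((cond_iff (Or.inl (le_refl (pmin a b))) c).trans (by rw [pmin_self])) rfl rfl]
  by_cases h : pmin a b = c <;> simp [h]

lemma G_val2 {a b : Q} (hab : a ≤ b ∨ b ≤ a) (c : Q) :
    G K c (pmin a b, 0, pmin a b) + G K c (a, 1, b) = 0 := by
  rw [G_apply, G_apply, if_congr (cond_iff hab c) rfl rfl,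
    if_congr ((cond_iff (Or.inl (le_refl (pmin a b))) c).trans (by rw [pmin_self])) rfl rfl]
  by_cases h : pmin a b = c <;> simp [h]

end Aux2
section Aux3
set_option linter.unusedSectionVars false
variable {K Q : Type*} [Field K] [Fintype Q] [PartialOrder Q]

lemma e_val1 {a b c d : Q} (hab : a ≤ b ∨ b ≤ a) (hcd : ¬c ≤ d ∧ ¬d ≤ c) (j : Fin 2) :
    e K c j d (a, 0, b) + e K c j d (pmin a b, 1, pmin a b) = 0 := by
  have hpm : ¬(pmin a b = c ∧ pmin a b = d) :=
    fun h => hcd.1 (le_of_eq (h.1.symm.trans h.2))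
  have hab' : ¬(a = c ∧ b = d) := by
    rintro ⟨rfl, rfl⟩; exact hab.elim hcd.1 hcd.2
  obtain hj | hj := (show j = 0 ∨ j = 1 by omega) <;> subst hj <;>
    simp [e, Prod.ext_iff, Fin.ext_iff, hab', hpm]

lemma e_val2 {a b c d : Q} (hab : a ≤ b ∨ b ≤ a) (hcd : ¬c ≤ d ∧ ¬d ≤ c) (j : Fin 2) :
    e K c j d (pmin a b, 0, pmin a b) + e K c j d (a, 1, b) = 0 := by
  have hpm : ¬(pmin a b = c ∧ pmin a b = d) :=
    fun h => hcd.1 (le_of_eq (h.1.symm.trans h.2))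
  have hab' : ¬(a = c ∧ b = d) := by
    rintro ⟨rfl, rfl⟩; exact hab.elim hcd.1 hcd.2
  obtain hj | hj := (show j = 0 ∨ j = 1 by omega) <;> subst hj <;>
    simp [e, Prod.ext_iff, Fin.ext_iff, hab', hpm]

end Aux3
/-- The annihilator `R_Q^⊥` of the relation space (the space of relations of the Koszul
dual `As(Q)^!`) is spanned by: (1) for each `a`, the element
`e(a,1,a) − e(a,2,a) + Σ_{a ≺ b} (e(b,1,a) + e(a,1,b) − e(b,2,a) − e(a,2,b))`;
(2)–(3) the elements `e(c,1,d)` and `e(c,2,d)` for incomparable `c, d`. -/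
theorem annihilator_relSpace_spanned {K Q : Type*} [Field K] [CharZero K]
    [Fintype Q] [PartialOrder Q] :
    annih K Q (relSpace K Q) = Submodule.span K
      ({x | ∃ a : Q,
          x = e K a 0 a - e K a 1 a +
            ∑ b ∈ Finset.univ.filter (fun b : Q => a < b),
              (e K b 0 a + e K a 0 b - e K b 1 a - e K a 1 b)} ∪
       {x | ∃ c d : Q, (¬ c ≤ d ∧ ¬ d ≤ c) ∧ (x = e K c 0 d ∨ x = e K c 1 d)}) := by
  apply le_antisymm
  · -- annih ≤ span
    intro v hv
    have h1 : ∀ a b : Q, (a ≤ b ∨ b ≤ a) →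
        v (a, 0, b) + v (pmin a b, 1, pmin a b) = 0 := by
      intro a b hab
      have := hv _ (Submodule.subset_span ⟨a, b, hab, Or.inl rfl⟩)
      rwa [bform_gen1] at this
    have h2 : ∀ a b : Q, (a ≤ b ∨ b ≤ a) →
        v (pmin a b, 0, pmin a b) + v (a, 1, b) = 0 := by
      intro a b hab
      have := hv _ (Submodule.subset_span ⟨a, b, hab, Or.inr rfl⟩)
      rwa [bform_gen2] at this
    have hdiag : ∀ a : Q, v (a, 1, a) = -v (a, 0, a) := by
      intro a
      have := h1 a a (Or.inl le_rfl)
      rw [pmin_self] at this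
      linear_combination this
    have key : v = (∑ a : Q, v (a, 0, a) • G K a)
        + ∑ c : Q, ∑ d : Q, (if ¬c ≤ d ∧ ¬d ≤ c then
            v (c, 0, d) • e K c 0 d + v (c, 1, d) • e K c 1 d else 0) := by
      funext p
      obtain ⟨x, i, y⟩ := p
      have hsnd : (∑ c : Q, ∑ d : Q, (if ¬c ≤ d ∧ ¬d ≤ c then
            v (c, 0, d) • e K c 0 d + v (c, 1, d) • e K c 1 d else 0)) (x, i, y)
          = if ¬x ≤ y ∧ ¬y ≤ x then v (x, i, y) else 0 := by
        simp only [Finset.sum_apply]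
        rw [Finset.sum_eq_single x]
        · rw [Finset.sum_eq_single y]
          · by_cases hxy : ¬x ≤ y ∧ ¬y ≤ x
            · rw [if_pos hxy, if_pos hxy]
              simp only [Pi.add_apply, Pi.smul_apply, smul_eq_mul, e, Prod.ext_iff]
              obtain hi | hi := (show i = 0 ∨ i = 1 by omega) <;> subst hi <;>
                simp [Fin.ext_iff]
            · rw [if_neg hxy, if_neg hxy, Pi.zero_apply]
          · intro d _ hd
            by_cases hP : ¬x ≤ d ∧ ¬d ≤ x
            · rw [if_pos hP]
              simp [e, Prod.ext_iff, Ne.symm hd]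
            · rw [if_neg hP, Pi.zero_apply]
          · intro h
            exact absurd (Finset.mem_univ y) h
        · intro c _ hc
          apply Finset.sum_eq_zero
          intro d _
          by_cases hP : ¬c ≤ d ∧ ¬d ≤ c
          · rw [if_pos hP]
            simp [e, Prod.ext_iff, Ne.symm hc]
          · rw [if_neg hP, Pi.zero_apply]
        · intro h
          exact absurd (Finset.mem_univ x) h
      simp only [Pi.add_apply]
      rw [hsnd]
      simp only [Finset.sum_apply, Pi.smul_apply, smul_eq_mul]
      by_cases hc : x ≤ y ∨ y ≤ x
      · -- comparable case
        have hfst : (∑ a : Q, v (a, 0, a) * G K a (x, i, y))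
            = v (pmin x y, 0, pmin x y) * (if i = 0 then 1 else -1) := by
          have hterm : ∀ a : Q, v (a, 0, a) * G K a (x, i, y)
              = if pmin x y = a then v (a, 0, a) * (if i = 0 then 1 else -1) else 0 := by
            intro a
            rw [G_apply, if_congr (cond_iff hc a) rfl rfl]
            by_cases h : pmin x y = a <;> simp [h]
          rw [Finset.sum_congr rfl fun a _ => hterm a, Finset.sum_ite_eq]
          simp
        have hninc : ¬(¬x ≤ y ∧ ¬y ≤ x) := by tauto
        rw [hfst, if_neg hninc, add_zero]
        obtain hi | hi := (show i = 0 ∨ i = 1 by omega) <;> subst hi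
        · rw [if_pos rfl]
          linear_combination h1 x y hc - hdiag (pmin x y)
        · rw [if_neg (show ((1 : Fin 2) ≠ 0) by decide)]
          linear_combination h2 x y hc
      · -- incomparable case
        push_neg at hc
        obtain ⟨hnx, hny⟩ := hc
        have hcond : ∀ a : Q,
            ¬((x = a ∧ y = a) ∨ (a < x ∧ y = a) ∨ (x = a ∧ a < y)) := by
          rintro a (⟨h1', h2'⟩ | ⟨h1', h2'⟩ | ⟨h1', h2'⟩)
          · exact hnx (le_of_eq (h1'.trans h2'.symm))
          · exact hny (by rw [h2']; exact h1'.le)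
          · exact hnx (by rw [h1']; exact h2'.le)
        have hfst : (∑ a : Q, v (a, 0, a) * G K a (x, i, y)) = 0 := by
          apply Finset.sum_eq_zero
          intro a _
          rw [G_apply, if_neg (hcond a), mul_zero]
        rw [hfst, if_pos ⟨hnx, hny⟩, zero_add]
    rw [key]
    apply Submodule.add_mem
    · apply Submodule.sum_mem
      intro a _
      exact Submodule.smul_mem _ _ (Submodule.subset_span (Or.inl ⟨a, rfl⟩))
    · apply Submodule.sum_mem
      intro c _
      apply Submodule.sum_mem
      intro d _
      by_cases hcd : ¬c ≤ d ∧ ¬d ≤ c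
      · rw [if_pos hcd]
        exact Submodule.add_mem _
          (Submodule.smul_mem _ _ (Submodule.subset_span (Or.inr ⟨c, d, hcd, Or.inl rfl⟩)))
          (Submodule.smul_mem _ _ (Submodule.subset_span (Or.inr ⟨c, d, hcd, Or.inr rfl⟩)))
      · rw [if_neg hcd]
        exact Submodule.zero_mem _
  · -- span ≤ annih
    rw [Submodule.span_le]
    rintro g hg r hr
    induction hr using Submodule.span_induction with
    | mem r hrmem =>
      obtain ⟨a, b, hab, (rfl | rfl)⟩ := hrmem
      · rw [bform_gen1]
        rcases hg with ⟨a', rfl⟩ | ⟨c, d, hcd, (rfl | rfl)⟩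
        · exact G_val1 hab a'
        · exact e_val1 hab hcd 0
        · exact e_val1 hab hcd 1
      · rw [bform_gen2]
        rcases hg with ⟨a', rfl⟩ | ⟨c, d, hcd, (rfl | rfl)⟩
        · exact G_val2 hab a'
        · exact e_val2 hab hcd 0
        · exact e_val2 hab hcd 1
    | zero => simp [bform]
    | add r1 r2 _ _ ih1 ih2 => rw [bform_add_left, ih1, ih2, add_zero]
    | smul c r _ ih => rw [bform_smul_left, ih, mul_zero]
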